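/- Two real numbers x and y that are not ∞-rationals are equivalent under the extended theta group if and only if their EICF expansions x = [a₁,a₂,…] and y = [b₁,b₂,…] satisfy: there exist positive integers m and n with either a_{m+i} = b_{n+i} for all i ≥ 1, or a_{m+i} = −b_{n+i} for all i ≥ 1. -/

import Mathlib

open Filter Topology OnePoint

/-- Inverse on ℚ ∪ {∞} (`Option.none` = ∞): 1/∞ = 0 and 1/0 = ∞. -/
def cfInv : Option ℚ → Option ℚ
  | Option.none => Option.some 0
  | Option.some q => if q = 0 then Option.none else Option.some q⁻¹

/-- Value of the finite continued fraction [b₁,…,bₙ] in ℚ ∪ {∞},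
with `cfVal [] = Option.none` (that is, ∞). -/
def cfVal : List ℤ → Option ℚ
  | [] => Option.none
  | b :: t => (cfInv (cfVal t)).map (fun q => (b : ℚ) + q)

/-- Embed ℚ ∪ {∞} into the extended real line ℝ ∪ {∞}. -/
def toOP : Option ℚ → OnePoint ℝ
  | Option.none => ∞
  | Option.some q => ((q : ℝ) : OnePoint ℝ)

/-- The n-th convergent (value of the first n+1 terms) of the continued fraction
with coefficients `b 0, b 1, …`. -/
def cfConv (b : ℕ → ℤ) (n : ℕ) : Option ℚ := cfVal ((List.range (n + 1)).map b)

/-- `b 0, b 1, …` is an even-integer continued fraction. -/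
def IsEICF (b : ℕ → ℤ) : Prop := (∀ i, Even (b i)) ∧ ∀ i ≥ 1, b i ≠ 0

/-- The even-integer continued fraction `b` is an expansion of `x`:
its convergents tend to `x` in the extended real line. -/
def IsEICFExpansion (b : ℕ → ℤ) (x : OnePoint ℝ) : Prop :=
  IsEICF b ∧ Tendsto (fun n => toOP (cfConv b n)) atTop (𝓝 x)


/-- `x` and `y` are equivalent under the extended theta group: `y = g(x)` for some
Möbius transformation `g` with integer coefficients, determinant ±1, whose matrix is
congruent mod 2 to the identity or to the antidiagonal matrix. -/
def ExtendedThetaEquiv (x y : ℝ) : Prop :=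
  ∃ a b c d : ℤ, (a * d - b * c = 1 ∨ a * d - b * c = -1) ∧
    ((Odd a ∧ Even b ∧ Even c ∧ Odd d) ∨ (Even a ∧ Odd b ∧ Odd c ∧ Even d)) ∧
    (c : ℝ) * x + d ≠ 0 ∧ y = ((a : ℝ) * x + b) / ((c : ℝ) * x + d)

noncomputable section

def negOP : OnePoint ℝ → OnePoint ℝ := OnePoint.map (fun x : ℝ => -x)

def addOP (r : ℝ) : OnePoint ℝ → OnePoint ℝ := OnePoint.map (fun x : ℝ => r + x)

def invOP : OnePoint ℝ → OnePoint ℝ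
  | ∞ => ((0:ℝ) : OnePoint ℝ)
  | (x : ℝ) => if x = 0 then ∞ else ((x⁻¹ : ℝ) : OnePoint ℝ)

@[simp] lemma negOP_infty : negOP ∞ = ∞ := rfl
@[simp] lemma negOP_coe (x : ℝ) : negOP x = ((-x : ℝ) : OnePoint ℝ) := rfl
@[simp] lemma addOP_infty (r : ℝ) : addOP r ∞ = ∞ := rfl
@[simp] lemma addOP_coe (r x : ℝ) : addOP r x = ((r + x : ℝ) : OnePoint ℝ) := rfl
@[simp] lemma invOP_infty : invOP ∞ = ((0:ℝ) : OnePoint ℝ) := rfl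
lemma invOP_coe (x : ℝ) : invOP x = if x = 0 then ∞ else ((x⁻¹ : ℝ) : OnePoint ℝ) := rfl
@[simp] lemma invOP_coe_zero : invOP ((0:ℝ) : OnePoint ℝ) = ∞ := by simp [invOP_coe]
@[simp] lemma invOP_coe_ne (x : ℝ) (hx : x ≠ 0) :
    invOP x = ((x⁻¹ : ℝ) : OnePoint ℝ) := by simp [invOP_coe, hx]

lemma continuous_negOP : Continuous negOP :=
  (Homeomorph.neg ℝ).onePointCongr.continuous

lemma continuous_addOP (r : ℝ) : Continuous (addOP r) :=
  (Homeomorph.addLeft r).onePointCongr.continuous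

lemma continuous_invOP : Continuous invOP := by
  rw [OnePoint.continuous_iff]
  constructor
  · -- at infinity
    rw [Filter.coclosedCompact_eq_cocompact]
    have h1 : Tendsto (fun x : ℝ => x⁻¹) (cocompact ℝ) (𝓝 0) := by
      rw [← Metric.cobounded_eq_cocompact]; exact tendsto_inv₀_cobounded
    have h2 : ∀ᶠ x : ℝ in cocompact ℝ, invOP x = ((x⁻¹ : ℝ) : OnePoint ℝ) := by
      have h0 : {(0:ℝ)}ᶜ ∈ cocompact ℝ :=
        mem_cocompact.2 ⟨{0}, isCompact_singleton, le_refl _⟩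
      filter_upwards [h0] with x hx
      exact invOP_coe_ne x hx
    have : Tendsto (fun x : ℝ => invOP x) (cocompact ℝ) (𝓝 (((0:ℝ) : OnePoint ℝ))) :=
      Tendsto.congr' (EventuallyEq.symm h2) ((OnePoint.continuous_coe.tendsto _).comp h1)
    simpa using this
  · -- on ℝ
    rw [continuous_iff_continuousAt]
    intro x₀
    rcases eq_or_ne x₀ 0 with rfl | hx₀
    · -- at 0, tends to ∞
      have h0 : invOP ((0:ℝ):OnePoint ℝ) = ∞ := by simp
      rw [ContinuousAt]; rw [show invOP ((0:ℝ):OnePoint ℝ) = ∞ from h0]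
      rw [OnePoint.hasBasis_nhds_infty.tendsto_right_iff]
      rintro s ⟨-, hsc⟩
      obtain ⟨M, hM⟩ := hsc.isBounded.subset_closedBall 0
      set M' : ℝ := max M 0 with hM'
      have hpos : (0:ℝ) < (M' + 1)⁻¹ := by positivity
      filter_upwards [Metric.ball_mem_nhds (0:ℝ) hpos] with x hx
      rcases eq_or_ne x 0 with rfl | hx0
      · simp
      · left
        refine ⟨x⁻¹, ?_, by simp [hx0]⟩
        intro hmem
        have h1 : |x| < (M' + 1)⁻¹ := by
          simpa [Real.dist_eq] using hx
        have h2 : |x|⁻¹ ≤ M := by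
          simpa [Real.dist_eq] using hM hmem
        have h3 : (0:ℝ) < |x| := abs_pos.2 hx0
        have h5 : |x| * |x|⁻¹ = 1 := mul_inv_cancel₀ (ne_of_gt h3)
        have h6 : M ≤ M' := le_max_left _ _
        have hM1 : (0:ℝ) < M' + 1 := by positivity
        have e2 : |x| * |x|⁻¹ ≤ |x| * (M' + 1) := by
          apply mul_le_mul_of_nonneg_left _ h3.le
          linarith
        have e3 : |x| * (M' + 1) < (M'+1)⁻¹ * (M'+1) :=
          mul_lt_mul_of_pos_right h1 hM1
        have e4 : (M'+1)⁻¹ * (M'+1) = 1 := inv_mul_cancel₀ (ne_of_gt hM1)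
        linarith
    · have hev : ∀ᶠ x : ℝ in 𝓝 x₀, invOP x = ((x⁻¹ : ℝ) : OnePoint ℝ) := by
        filter_upwards [eventually_ne_nhds hx₀] with x hx using invOP_coe_ne x hx
      exact ContinuousAt.congr
        ((OnePoint.continuous_coe.tendsto _).comp (continuousAt_inv₀ hx₀)) (EventuallyEq.symm hev)

lemma invOP_invOP : ∀ z, invOP (invOP z) = z := by
  intro z
  cases z with
  | infty => simp
  | coe x =>
    rcases eq_or_ne x 0 with rfl | hx
    · simp
    · rw [invOP_coe_ne x hx, invOP_coe_ne _ (inv_ne_zero hx), inv_inv]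

lemma invOP_injective : Function.Injective invOP := by
  intro z w h
  have := congrArg invOP h
  rwa [invOP_invOP, invOP_invOP] at this

-- ### section 2

/-- The step map `z ↦ c + 1/z` on `OnePoint ℝ`. -/
noncomputable def stepOP (c : ℝ) (z : OnePoint ℝ) : OnePoint ℝ := addOP c (invOP z)

/-- The inverse step map `z ↦ 1/(z - c)` on `OnePoint ℝ`. -/
noncomputable def istepOP (c : ℝ) (z : OnePoint ℝ) : OnePoint ℝ := invOP (addOP (-c) z)

@[simp] lemma stepOP_infty (c : ℝ) : stepOP c ∞ = ((c : ℝ) : OnePoint ℝ) := by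
  simp [stepOP]

@[simp] lemma stepOP_coe_zero (c : ℝ) : stepOP c ((0:ℝ) : OnePoint ℝ) = ∞ := by
  simp [stepOP]

lemma stepOP_coe_ne (c x : ℝ) (hx : x ≠ 0) :
    stepOP c x = ((c + x⁻¹ : ℝ) : OnePoint ℝ) := by
  simp [stepOP, hx]

lemma istepOP_stepOP (c : ℝ) (z : OnePoint ℝ) : istepOP c (stepOP c z) = z := by
  cases z with
  | infty => simp [istepOP]
  | coe x =>
    rcases eq_or_ne x 0 with rfl | hx
    · simp [istepOP]
    · rw [stepOP_coe_ne c x hx]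
      simp only [istepOP, addOP_coe]
      have h : -c + (c + x⁻¹) = x⁻¹ := by ring
      rw [h, invOP_coe_ne _ (inv_ne_zero hx), inv_inv]

lemma stepOP_istepOP (c : ℝ) (z : OnePoint ℝ) : stepOP c (istepOP c z) = z := by
  cases z with
  | infty => simp [istepOP, stepOP]
  | coe x =>
    rcases eq_or_ne (-c + x) 0 with h | h
    · have hx : x = c := by linarith [h]
      subst hx
      simp only [istepOP, addOP_coe, h, invOP_coe_zero, stepOP_infty]
    · simp only [istepOP, addOP_coe]
      rw [invOP_coe_ne _ h, stepOP_coe_ne _ _ (inv_ne_zero h), inv_inv]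
      norm_num

lemma stepOP_injective (c : ℝ) : Function.Injective (stepOP c) := by
  intro z w h
  have := congrArg (istepOP c) h
  rwa [istepOP_stepOP, istepOP_stepOP] at this

lemma continuous_stepOP (c : ℝ) : Continuous (stepOP c) :=
  (continuous_addOP c).comp continuous_invOP

lemma continuous_istepOP (c : ℝ) : Continuous (istepOP c) :=
  continuous_invOP.comp (continuous_addOP (-c))

/-- unfolding of a convergent along the head coefficient -/
lemma cfConv_succ (a : ℕ → ℤ) (n : ℕ) :
    cfConv a (n+1) = (cfInv (cfConv (fun i => a (i+1)) n)).map (fun q => (a 0 : ℚ) + q) := by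
  show cfVal ((List.range (n + 2)).map a) = _
  rw [List.range_succ_eq_map, List.map_cons, List.map_map]
  rfl

lemma toOP_step (c : ℤ) (v : Option ℚ) :
    toOP ((cfInv v).map (fun q => (c:ℚ) + q)) = stepOP (c:ℝ) (toOP v) := by
  cases v with
  | none =>
    show toOP (Option.some ((c:ℚ) + 0)) = stepOP (c:ℝ) ∞
    rw [stepOP_infty]
    simp [toOP]
  | some q =>
    rcases eq_or_ne q 0 with rfl | hq
    · show toOP (Option.map _ (cfInv (Option.some 0))) = stepOP (c:ℝ) (toOP (Option.some 0))
      simp [cfInv, toOP]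
    · have hq' : ((q:ℝ)) ≠ 0 := by exact_mod_cast hq
      show toOP (Option.map _ (cfInv (Option.some q))) = stepOP (c:ℝ) (toOP (Option.some q))
      simp only [cfInv, if_neg hq, Option.map_some, toOP]
      rw [stepOP_coe_ne _ _ hq']
      push_cast
      rfl

lemma toOP_conv_succ (a : ℕ → ℤ) (n : ℕ) :
    toOP (cfConv a (n+1)) = stepOP ((a 0 : ℝ)) (toOP (cfConv (fun i => a (i+1)) n)) := by
  rw [cfConv_succ, toOP_step]

/-- limit transfer to the tail -/
lemma tendsto_tail {a : ℕ → ℤ} {z : OnePoint ℝ}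
    (h : Tendsto (fun n => toOP (cfConv a n)) atTop (𝓝 z)) :
    Tendsto (fun n => toOP (cfConv (fun i => a (i+1)) n)) atTop (𝓝 (istepOP (a 0) z)) ∧
      z = stepOP ((a 0 : ℝ)) (istepOP ((a 0 : ℝ)) z) := by
  constructor
  · have h1 : Tendsto (fun n => toOP (cfConv a (n+1))) atTop (𝓝 z) :=
      h.comp (tendsto_add_atTop_nat 1)
    have h2 : (fun n => toOP (cfConv (fun i => a (i+1)) n)) =
        fun n => istepOP ((a 0 : ℝ)) (toOP (cfConv a (n+1))) := by
      funext n
      rw [toOP_conv_succ, istepOP_stepOP]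
    rw [h2]
    exact ((continuous_istepOP _).tendsto z).comp h1
  · rw [stepOP_istepOP]

-- ### negation lemmas

lemma cfInv_neg (v : Option ℚ) :
    cfInv (v.map (fun q => -q)) = (cfInv v).map (fun q => -q) := by
  cases v with
  | none => simp [cfInv]
  | some q =>
    rcases eq_or_ne q 0 with rfl | hq
    · simp [cfInv]
    · simp [cfInv, hq, neg_eq_zero, inv_neg]

lemma cfVal_neg (l : List ℤ) :
    cfVal (l.map (fun c => -c)) = (cfVal l).map (fun q => -q) := by
  induction l with
  | nil => simp [cfVal]
  | cons c t ih =>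
    show cfVal ((-c) :: t.map (fun c => -c)) = _
    show (cfInv (cfVal (t.map (fun c => -c)))).map (fun q => ((-c : ℤ) : ℚ) + q) = _
    rw [ih, cfInv_neg]
    show _ = ((cfInv (cfVal t)).map (fun q => (c : ℚ) + q)).map (fun q => -q)
    rw [Option.map_map, Option.map_map]
    congr 1
    funext q
    simp only [Function.comp_apply]
    push_cast
    ring

lemma cfConv_neg (a : ℕ → ℤ) (n : ℕ) :
    cfConv (fun i => -(a i)) n = (cfConv a n).map (fun q => -q) := by
  unfold cfConv
  rw [show (List.range (n+1)).map (fun i => -(a i)) = ((List.range (n+1)).map a).map (fun c => -c) by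
    rw [List.map_map]; rfl]
  exact cfVal_neg _

lemma toOP_neg (v : Option ℚ) : toOP (v.map (fun q => -q)) = negOP (toOP v) := by
  cases v with
  | none => simp [toOP]
  | some q => simp [toOP]

-- ### bound lemma

lemma two_le_abs_of_even_ne (c : ℤ) (hE : Even c) (h0 : c ≠ 0) : (2:ℚ) ≤ |(c:ℚ)| := by
  have h2 : (2:ℤ) ≤ |c| := by
    obtain ⟨k, rfl⟩ := hE
    have hk : k ≠ 0 := by intro h; apply h0; rw [h]; ring
    have := Int.one_le_abs (by exact hk : k ≠ 0)
    rw [show k + k = 2 * k by ring, abs_mul]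
    simp only [abs_two]
    omega
  calc (2:ℚ) = ((2:ℤ):ℚ) := by norm_num
  _ ≤ ((|c|:ℤ):ℚ) := by exact_mod_cast h2
  _ = |(c:ℚ)| := by rw [Int.cast_abs]

lemma cfVal_bound (l : List ℤ) (h : ∀ c ∈ l, Even c ∧ c ≠ 0) :
    cfVal l = Option.none ∨ ∃ q : ℚ, cfVal l = Option.some q ∧ 1 ≤ |q| := by
  induction l with
  | nil => left; rfl
  | cons c t ih =>
    right
    have hc := h c List.mem_cons_self
    have habs : (2:ℚ) ≤ |(c:ℚ)| := two_le_abs_of_even_ne c hc.1 hc.2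
    rcases ih (fun d hd => h d (List.mem_cons_of_mem c hd)) with hnone | ⟨q, hq, hq1⟩
    · refine ⟨(c:ℚ) + 0, ?_, ?_⟩
      · show (cfInv (cfVal t)).map _ = _
        rw [hnone]; rfl
      · rw [add_zero]; linarith
    · have hq0 : q ≠ 0 := by
        intro h0; rw [h0] at hq1; norm_num at hq1
      refine ⟨(c:ℚ) + q⁻¹, ?_, ?_⟩
      · show (cfInv (cfVal t)).map _ = _
        rw [hq]
        simp [cfInv, hq0]
      · have h1 : |q⁻¹| ≤ 1 := by
          rw [abs_inv]
          exact inv_le_one_of_one_le₀ hq1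
        have h2 := abs_add_le ((c:ℚ) + q⁻¹) (-q⁻¹)
        simp only [add_neg_cancel_right, abs_neg] at h2
        linarith

-- ### parity/Goodness

/-- `x` is irrational or a quotient of two odd integers. -/
def Good (x : ℝ) : Prop := ∀ q : ℚ, x = (q : ℝ) → Odd q.num ∧ Odd (q.den : ℤ)

lemma oddQ_of_odd_div (u v : ℤ) (hu : Odd u) (hv : Odd v) (q : ℚ)
    (hq : (q : ℚ) = (u : ℚ) / (v : ℚ)) : Odd q.num ∧ Odd (q.den : ℤ) := by
  have hv0 : v ≠ 0 := by rintro rfl; exact (Int.not_even_iff_odd.2 hv) Even.zero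
  have hv0' : ((v:ℚ)) ≠ 0 := Int.cast_ne_zero.2 hv0
  have hden : ((q.den : ℚ)) ≠ 0 := by
    exact_mod_cast q.den_ne_zero
  -- u * q.den = q.num * v
  have key : u * (q.den : ℤ) = q.num * v := by
    have h1 : (q : ℚ) = (q.num : ℚ) / (q.den : ℚ) := by
      rw [Rat.num_div_den]
    have h2 : (u : ℚ) * (q.den : ℚ) = (q.num : ℚ) * (v : ℚ) := by
      field_simp at hq ⊢
      rw [h1] at hq
      field_simp at hq
      linarith [hq]
    exact_mod_cast h2
  have hcop : ¬(Even q.num ∧ Even ((q.den : ℤ))) := by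
    rintro ⟨he1, he2⟩
    have h5 : (2:ℕ) ∣ q.num.natAbs := by
      have : (2:ℤ) ∣ q.num := he1.two_dvd
      rw [show (2:ℕ) = (2:ℤ).natAbs from rfl]
      exact Int.natAbs_dvd_natAbs.2 this
    have h6 : (2:ℕ) ∣ q.den := by
      have : (2:ℤ) ∣ (q.den:ℤ) := he2.two_dvd
      exact_mod_cast this
    have hc := q.reduced
    have h7 := Nat.dvd_gcd h5 h6
    rw [Nat.Coprime] at hc
    rw [hc] at h7
    omega
  have hnum : Odd q.num := by
    by_contra hn
    rw [Int.not_odd_iff_even] at hn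
    have h3 : Even (q.num * v) := hn.mul_right v
    rw [← key] at h3
    rcases Int.even_mul.1 h3 with h4 | h4
    · exact (Int.not_even_iff_odd.2 hu) h4
    · exact hcop ⟨hn, h4⟩
  refine ⟨hnum, ?_⟩
  by_contra hn
  rw [Int.not_odd_iff_even] at hn
  have h3 : Even (u * (q.den:ℤ)) := hn.mul_left u
  rw [key] at h3
  rcases Int.even_mul.1 h3 with h4 | h4
  · exact hcop ⟨h4, hn⟩
  · exact (Int.not_even_iff_odd.2 hv) h4

lemma rat_mul_den (r : ℚ) : (r:ℚ) * (r.den:ℚ) = (r.num:ℚ) := by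
  have h1 := Rat.num_div_den r
  have hden : ((r.den : ℚ)) ≠ 0 := by exact_mod_cast r.den_ne_zero
  rw [div_eq_iff hden] at h1
  linarith

lemma rat_not_both_even (q : ℚ) : ¬(Even q.num ∧ Even ((q.den : ℤ))) := by
  rintro ⟨he1, he2⟩
  have h5 : (2:ℕ) ∣ q.num.natAbs := by
    have : (2:ℤ) ∣ q.num := he1.two_dvd
    rw [show (2:ℕ) = (2:ℤ).natAbs from rfl]
    exact Int.natAbs_dvd_natAbs.2 this
  have h6 : (2:ℕ) ∣ q.den := by
    have : (2:ℤ) ∣ (q.den:ℤ) := he2.two_dvd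
    exact_mod_cast this
  have hc := q.reduced
  have h7 := Nat.dvd_gcd h5 h6
  rw [Nat.Coprime] at hc
  rw [hc] at h7
  omega

lemma good_of_not_inftyRat {x : ℝ}
    (hx : ¬∃ q : ℚ, x = (q : ℝ) ∧ Odd (q.num + (q.den : ℤ))) : Good x := by
  intro q hq
  have h1 : ¬ Odd (q.num + (q.den : ℤ)) := fun h => hx ⟨q, hq, h⟩
  rw [Int.not_odd_iff_even] at h1
  rcases Int.even_or_odd q.num with he | ho
  · exfalso
    apply rat_not_both_even q
    refine ⟨he, ?_⟩
    rcases Int.even_add.1 h1 with h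
    exact h.1 he
  · refine ⟨ho, ?_⟩
    rw [Int.even_add] at h1
    rw [← Int.not_even_iff_odd] at ho ⊢
    tauto

lemma Good.ne_even_int {x : ℝ} (hx : Good x) {c : ℤ} (hc : Even c) : x ≠ (c:ℝ) := by
  intro h
  have := hx ((c:ℚ)) (by push_cast [h]; norm_num)
  rw [Rat.num_intCast] at this
  exact (Int.not_even_iff_odd.2 this.1) hc

lemma Good.ne_zero {x : ℝ} (hx : Good x) : x ≠ 0 := by
  have := hx.ne_even_int (c := 0) (by simp)
  simpa using this

lemma Good.sub_int {x : ℝ} (hx : Good x) {c : ℤ} (hc : Even c) : Good (x - (c:ℝ)) := by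
  intro q hq
  have hxq : x = ((q + (c:ℚ) : ℚ) : ℝ) := by push_cast; linarith
  obtain ⟨hn, hd⟩ := hx _ hxq
  set p : ℚ := q + (c:ℚ) with hp
  have hval : (q : ℚ) = ((p.num - c * p.den : ℤ) : ℚ) / ((p.den : ℤ) : ℚ) := by
    have hden : ((p.den : ℚ)) ≠ 0 := by exact_mod_cast p.den_ne_zero
    have hpd : (p:ℚ) * (p.den:ℚ) = (p.num:ℚ) := rat_mul_den p
    have hqc : q = p - (c:ℚ) := by rw [hp]; ring
    push_cast
    rw [eq_div_iff hden, hqc]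
    nlinarith [hpd]
  exact oddQ_of_odd_div _ _ (hn.sub_even (hc.mul_right _)) hd q hval

lemma Good.neg {x : ℝ} (hx : Good x) : Good (-x) := by
  intro q hq
  have hxq : x = ((-q : ℚ) : ℝ) := by push_cast; linarith
  obtain ⟨hn, hd⟩ := hx _ hxq
  set p : ℚ := -q with hp
  have hval : (q : ℚ) = ((-p.num : ℤ) : ℚ) / ((p.den : ℤ) : ℚ) := by
    have hden : ((p.den : ℚ)) ≠ 0 := by exact_mod_cast p.den_ne_zero
    have hpd : (p:ℚ) * (p.den:ℚ) = (p.num:ℚ) := rat_mul_den p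
    have hqc : q = -p := by rw [hp]; ring
    push_cast
    rw [eq_div_iff hden, hqc]
    nlinarith [hpd]
  exact oddQ_of_odd_div _ _ hn.neg hd q hval

lemma Good.inv {x : ℝ} (hx : Good x) : Good x⁻¹ := by
  intro q hq
  rcases eq_or_ne q 0 with rfl | hq0
  · exfalso
    rcases eq_or_ne x 0 with rfl | hx0
    · have h := (hx 0 (by norm_num)).1
      norm_num at h
    · rw [Rat.cast_zero] at hq
      exact hx0 (inv_eq_zero.1 hq)
  · have hxq : x = ((q⁻¹ : ℚ) : ℝ) := by
      rw [Rat.cast_inv]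
      rw [← hq, inv_inv]
    obtain ⟨hn, hd⟩ := hx _ hxq
    set p : ℚ := q⁻¹ with hp
    have hnum0 : p.num ≠ 0 := by
      intro h
      rw [h] at hn
      exact (Int.not_odd_iff_even.2 Even.zero) hn
    have hval : (q : ℚ) = ((p.den : ℤ) : ℚ) / ((p.num : ℤ) : ℚ) := by
      have hden : ((p.den : ℚ)) ≠ 0 := by exact_mod_cast p.den_ne_zero
      have hnum' : ((p.num : ℚ)) ≠ 0 := by exact_mod_cast hnum0
      have hp0 : (p:ℚ) ≠ 0 := by
        rw [hp]
        exact inv_ne_zero hq0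
      have hpd : (p:ℚ) * (p.den:ℚ) = (p.num:ℚ) := rat_mul_den p
      have hqp : q = p⁻¹ := by rw [hp, inv_inv]
      push_cast
      rw [eq_div_iff hnum', hqp]
      rw [inv_mul_eq_div, div_eq_iff hp0]
      linear_combination -hpd
    exact oddQ_of_odd_div _ _ hd hn q hval

-- ### section 4 : tail sequence

def tailSeq (a : ℕ → ℤ) (x : ℝ) : ℕ → ℝ
  | 0 => x
  | m+1 => (tailSeq a x m - (a m : ℝ))⁻¹

lemma tail_props {a : ℕ → ℤ} {x : ℝ} (ha : IsEICF a)
    (hten : Tendsto (fun n => toOP (cfConv a n)) atTop (𝓝 ((x : ℝ) : OnePoint ℝ)))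
    (hg : Good x) :
    ∀ m, Good (tailSeq a x m) ∧
      Tendsto (fun n => toOP (cfConv (fun i => a (m+i)) n)) atTop
        (𝓝 ((tailSeq a x m : ℝ) : OnePoint ℝ)) := by
  intro m
  induction m with
  | zero =>
    refine ⟨hg, ?_⟩
    have h : (fun i => a (0+i)) = a := by funext i; rw [Nat.zero_add]
    rw [h]
    exact hten
  | succ m ih =>
    obtain ⟨hgm, htm⟩ := ih
    set t := tailSeq a x m with htdef
    have hne : t - ((a m : ℤ) : ℝ) ≠ 0 := by
      have h2 := hgm.ne_even_int (ha.1 m)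
      intro h; apply h2; linarith
    obtain ⟨h1, -⟩ := tendsto_tail htm
    have hfun : (fun i => a (m+(i+1))) = (fun i => a (m+1+i)) := by
      funext i; congr 1; omega
    have histep : istepOP (((a m : ℤ) : ℝ)) ((t : ℝ) : OnePoint ℝ)
        = (((t - ((a m : ℤ):ℝ))⁻¹ : ℝ) : OnePoint ℝ) := by
      show invOP (addOP _ _) = _
      rw [addOP_coe, invOP_coe_ne _ (by intro h; exact hne (by linarith))]
      rw [neg_add_eq_sub]
    simp only [Nat.add_zero] at h1
    rw [hfun, histep] at h1
    exact ⟨(hgm.sub_int (ha.1 m)).inv, h1⟩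

lemma tail_bound {a : ℕ → ℤ} {x : ℝ} (ha : IsEICF a)
    (hten : Tendsto (fun n => toOP (cfConv a n)) atTop (𝓝 ((x : ℝ) : OnePoint ℝ)))
    (hg : Good x) (m : ℕ) (hm : 1 ≤ m) : 1 ≤ |tailSeq a x m| := by
  have htm := (tail_props ha hten hg m).2
  set S : Set (OnePoint ℝ) := {z | z = ∞ ∨ ∃ r : ℝ, z = (r : OnePoint ℝ) ∧ 1 ≤ |r|} with hS
  have hcompl : Sᶜ = (fun r : ℝ => (r : OnePoint ℝ)) '' {r | |r| < 1} := by
    ext z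
    cases z with
    | infty =>
      simp only [Set.mem_compl_iff, Set.mem_image, hS, Set.mem_setOf_eq]
      constructor
      · intro h; exact absurd (Or.inl trivial) h
      · rintro ⟨r, -, hr⟩; exact absurd hr (OnePoint.coe_ne_infty r)
    | coe r =>
      simp only [Set.mem_compl_iff, Set.mem_image, hS, Set.mem_setOf_eq]
      constructor
      · intro h
        push_neg at h
        obtain ⟨-, h2⟩ := h
        have h3 : ¬ (1:ℝ) ≤ |r| := by simpa using h2 r rfl
        exact ⟨r, not_le.1 h3, rfl⟩
      · rintro ⟨s, hs, hsr⟩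
        rw [OnePoint.coe_eq_coe] at hsr
        subst hsr
        push_neg
        refine ⟨OnePoint.coe_ne_infty s, ?_⟩
        rintro r' hr'
        rw [OnePoint.coe_eq_coe] at hr'
        subst hr'
        linarith [hs]
  have hclosed : IsClosed S := by
    rw [← isOpen_compl_iff, hcompl]
    exact OnePoint.isOpenMap_coe _ (isOpen_lt continuous_abs continuous_const)
  have hmem : ∀ n, toOP (cfConv (fun i => a (m+i)) n) ∈ S := by
    intro n
    have hl : ∀ c ∈ (List.range (n+1)).map (fun i => a (m+i)), Even c ∧ c ≠ 0 := by
      intro c hc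
      obtain ⟨i, -, rfl⟩ := List.mem_map.1 hc
      exact ⟨ha.1 _, ha.2 _ (by omega)⟩
    rcases cfVal_bound _ hl with hnone | ⟨q, hq, h1⟩
    · left
      show toOP (cfVal _) = ∞
      rw [hnone]; rfl
    · right
      refine ⟨((q : ℚ) : ℝ), ?_, ?_⟩
      · show toOP (cfVal _) = _
        rw [hq]; rfl
      · have : ((|q| : ℚ) : ℝ) = |((q:ℚ):ℝ)| := by push_cast; ring
        rw [← this]
        exact_mod_cast h1
  have hmemS : ((tailSeq a x m : ℝ) : OnePoint ℝ) ∈ S :=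
    hclosed.mem_of_tendsto htm (Filter.Eventually.of_forall hmem)
  rcases hmemS with h | ⟨r, hr, h1⟩
  · exact absurd h (OnePoint.coe_ne_infty _)
  · rw [OnePoint.coe_eq_coe] at hr
    rw [hr]
    exact h1

lemma tail_ne_int {a : ℕ → ℤ} {x : ℝ} (ha : IsEICF a)
    (hten : Tendsto (fun n => toOP (cfConv a n)) atTop (𝓝 ((x : ℝ) : OnePoint ℝ)))
    (hg : Good x) (m : ℕ) : tailSeq a x m - ((a m : ℤ) : ℝ) ≠ 0 := by
  have h2 := ((tail_props ha hten hg m).1).ne_even_int (ha.1 m)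
  intro h; apply h2; linarith

lemma tail_step_eq {a : ℕ → ℤ} {x : ℝ} (ha : IsEICF a)
    (hten : Tendsto (fun n => toOP (cfConv a n)) atTop (𝓝 ((x : ℝ) : OnePoint ℝ)))
    (hg : Good x) (m : ℕ) :
    tailSeq a x m = ((a m : ℤ) : ℝ) + (tailSeq a x (m+1))⁻¹ := by
  have hne := tail_ne_int ha hten hg m
  show tailSeq a x m = _ + ((tailSeq a x m - ((a m : ℤ):ℝ))⁻¹)⁻¹
  rw [inv_inv]
  ring

lemma tail_ne_zero {a : ℕ → ℤ} {x : ℝ} (ha : IsEICF a)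
    (hten : Tendsto (fun n => toOP (cfConv a n)) atTop (𝓝 ((x : ℝ) : OnePoint ℝ)))
    (hg : Good x) (m : ℕ) : tailSeq a x m ≠ 0 :=
  ((tail_props ha hten hg m).1).ne_zero

-- ### section 5 : uniqueness of EICF tails

/-- tails agree up to a sign -/
def TailRelE (a b : ℕ → ℤ) : Prop :=
  ∃ m n : ℕ, ∃ ε : ℤ, (ε = 1 ∨ ε = -1) ∧ ∀ i, a (m+i) = ε * b (n+i)

lemma TailRelE.refl (a : ℕ → ℤ) : TailRelE a a :=
  ⟨0, 0, 1, Or.inl rfl, fun i => by ring⟩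

lemma TailRelE.symm {a b : ℕ → ℤ} (h : TailRelE a b) : TailRelE b a := by
  obtain ⟨m, n, ε, hε, h⟩ := h
  refine ⟨n, m, ε, hε, fun i => ?_⟩
  have := h i
  rcases hε with rfl | rfl <;> omega

lemma TailRelE.trans {a b c : ℕ → ℤ} (h1 : TailRelE a b) (h2 : TailRelE b c) :
    TailRelE a c := by
  obtain ⟨m, n, ε, hε, h1⟩ := h1
  obtain ⟨n', k, δ, hδ, h2⟩ := h2
  rcases le_total n n' with hle | hle
  · refine ⟨m + (n' - n), k, ε * δ, ?_, fun i => ?_⟩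
    · rcases hε with rfl | rfl <;> rcases hδ with rfl | rfl <;> simp
    · have e1 := h1 ((n' - n) + i)
      have e2 := h2 i
      have hn : n + ((n' - n) + i) = n' + i := by omega
      rw [hn] at e1
      have hm : m + (n' - n) + i = m + ((n' - n) + i) := by omega
      rw [hm, e1, e2]
      ring
  · refine ⟨m, k + (n - n'), ε * δ, ?_, fun i => ?_⟩
    · rcases hε with rfl | rfl <;> rcases hδ with rfl | rfl <;> simp
    · have e1 := h1 i
      have e2 := h2 ((n - n') + i)
      have hn : n' + ((n - n') + i) = n + i := by omega
      rw [hn] at e2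
      have hk : k + (n - n') + i = k + ((n - n') + i) := by omega
      rw [hk, e1, e2]
      ring

lemma int_window {t : ℝ} {k c : ℤ} (hkt : t = (k:ℝ)) (hw : |t - (c:ℝ)| ≤ 1) :
    |k - c| ≤ 1 := by
  have h2 : |(k:ℝ) - (c:ℝ)| ≤ 1 := by rw [← hkt]; exact hw
  exact_mod_cast h2

lemma tail_window {a : ℕ → ℤ} {x : ℝ} (ha : IsEICF a)
    (hten : Tendsto (fun n => toOP (cfConv a n)) atTop (𝓝 ((x : ℝ) : OnePoint ℝ)))
    (hg : Good x) (m : ℕ) : |tailSeq a x m - ((a m : ℤ):ℝ)| ≤ 1 := by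
  have h1 : 1 ≤ |tailSeq a x (m+1)| := tail_bound ha hten hg (m+1) (by omega)
  have h2 : tailSeq a x (m+1) = (tailSeq a x m - ((a m : ℤ):ℝ))⁻¹ := rfl
  have hne := tail_ne_int ha hten hg m
  rw [h2, abs_inv] at h1
  have h3 : 0 < |tailSeq a x m - ((a m:ℤ):ℝ)| := abs_pos.2 hne
  nlinarith [mul_inv_cancel₀ (ne_of_gt h3)]

lemma coeff_of_pm1 {a : ℕ → ℤ} {x : ℝ} (ha : IsEICF a)
    (hten : Tendsto (fun n => toOP (cfConv a n)) atTop (𝓝 ((x : ℝ) : OnePoint ℝ)))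
    (hg : Good x) (m : ℕ) (ε : ℤ) (hm : 1 ≤ m) (hε : ε = 1 ∨ ε = -1)
    (ht : tailSeq a x m = ((ε:ℤ):ℝ)) : a m = 2 * ε := by
  have hw := tail_window ha hten hg m
  have hcast := int_window ht hw
  obtain ⟨k, hk⟩ := ha.1 m
  have h0 := ha.2 m hm
  rw [abs_le] at hcast
  rcases hε with rfl | rfl <;> omega

lemma next_of_pm1 {a : ℕ → ℤ} {x : ℝ} (ha : IsEICF a)
    (hten : Tendsto (fun n => toOP (cfConv a n)) atTop (𝓝 ((x : ℝ) : OnePoint ℝ)))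
    (hg : Good x) (m : ℕ) (ε : ℤ) (hm : 1 ≤ m) (hε : ε = 1 ∨ ε = -1)
    (ht : tailSeq a x m = ((ε:ℤ):ℝ)) : tailSeq a x (m+1) = ((-ε : ℤ):ℝ) := by
  have hc := coeff_of_pm1 ha hten hg m ε hm hε ht
  show (tailSeq a x m - ((a m : ℤ):ℝ))⁻¹ = _
  rw [ht, hc]
  rcases hε with rfl | rfl <;> norm_num

lemma tail_locked {a : ℕ → ℤ} {x : ℝ} (ha : IsEICF a)
    (hten : Tendsto (fun n => toOP (cfConv a n)) atTop (𝓝 ((x : ℝ) : OnePoint ℝ)))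
    (hg : Good x) : ∀ (i m : ℕ) (ε : ℤ), 1 ≤ m → (ε = 1 ∨ ε = -1) →
    tailSeq a x m = ((ε:ℤ):ℝ) → a (m+i) = 2 * ε * (-1)^i := by
  intro i
  induction i with
  | zero =>
    intro m ε hm hε ht
    have := coeff_of_pm1 ha hten hg m ε hm hε ht
    simpa using this
  | succ i IH =>
    intro m ε hm hε ht
    have hnext := next_of_pm1 ha hten hg m ε hm hε ht
    have hε' : -ε = 1 ∨ -ε = -1 := by rcases hε with rfl | rfl <;> simp
    have hih := IH (m+1) (-ε) (by omega) hε' hnext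
    rw [show m + (i+1) = (m+1) + i by omega, hih]
    ring

/-- uniqueness of EICF expansions of the same good real, up to tails -/
lemma tails_unique {a b : ℕ → ℤ} {x : ℝ} (ha : IsEICF a) (hb : IsEICF b)
    (htena : Tendsto (fun n => toOP (cfConv a n)) atTop (𝓝 ((x : ℝ) : OnePoint ℝ)))
    (htenb : Tendsto (fun n => toOP (cfConv b n)) atTop (𝓝 ((x : ℝ) : OnePoint ℝ)))
    (hg : Good x) : TailRelE a b := by
  by_cases hrel : TailRelE a b
  · exact hrel
  have key : ∀ m, (∀ j < m, a j = b j) ∧ tailSeq a x m = tailSeq b x m := by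
    intro m
    induction m with
    | zero => exact ⟨fun j hj => absurd hj (Nat.not_lt_zero j), rfl⟩
    | succ m ih =>
      obtain ⟨hpre, heq⟩ := ih
      have hwa := tail_window ha htena hg m
      have hwb := tail_window hb htenb hg m
      rw [← heq] at hwb
      set t := tailSeq a x m with htdef
      have hab : a m = b m := by
        by_contra hne
        -- then t is an odd integer k, and the two expansions lock with opposite signs
        obtain ⟨ka, hka⟩ := ha.1 m
        obtain ⟨kb, hkb⟩ := hb.1 m
        -- show t must equal an integer: since a m ≠ b m, both within distance 1
        -- |t - a m| ≤ 1, |t - b m| ≤ 1, a m, b m even, distinct ⇒ |a m - b m| = 2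
        -- and t is the midpoint
        have habs : |((a m : ℤ):ℝ) - ((b m : ℤ):ℝ)| ≤ 2 := by
          have := abs_sub ((t - ((a m : ℤ):ℝ))) ((t - ((b m : ℤ):ℝ)))
          have h2 := abs_sub_abs_le_abs_sub (t - ((a m : ℤ):ℝ)) (t - ((b m : ℤ):ℝ))
          have h3 := abs_sub_comm ((a m : ℤ):ℝ) ((b m : ℤ):ℝ)
          calc |((a m : ℤ):ℝ) - ((b m : ℤ):ℝ)|
              = |(t - ((b m : ℤ):ℝ)) - (t - ((a m : ℤ):ℝ))| := by ring_nf
            _ ≤ |t - ((b m : ℤ):ℝ)| + |t - ((a m : ℤ):ℝ)| := abs_sub _ _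
            _ ≤ 2 := by linarith
        have habs' : |a m - b m| ≤ 2 := by exact_mod_cast habs
        rw [abs_le] at habs'
        have hdiff : a m - b m = 2 ∨ a m - b m = -2 := by
          have hnee : a m ≠ b m := hne
          omega
        -- t = (a m + b m)/2, an odd integer
        have hmid : ∃ k : ℤ, Odd k ∧ t = (k:ℝ) := by
          rcases hdiff with hd | hd
          · refine ⟨b m + 1, by exact ⟨kb, by omega⟩, ?_⟩
            have h1 : t - ((a m : ℤ):ℝ) ≥ -1 := by
              have := abs_le.1 hwa; linarith [this.1]
            have h2 : t - ((b m : ℤ):ℝ) ≤ 1 := by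
              have := abs_le.1 hwb; linarith [this.2]
            have : ((a m : ℤ):ℝ) = ((b m : ℤ):ℝ) + 2 := by
              have : (a m : ℤ) = b m + 2 := by omega
              exact_mod_cast this
            push_cast
            linarith
          · refine ⟨a m + 1, by exact ⟨ka, by omega⟩, ?_⟩
            have h1 : t - ((a m : ℤ):ℝ) ≤ 1 := by
              have := abs_le.1 hwa; linarith [this.2]
            have h2 : t - ((b m : ℤ):ℝ) ≥ -1 := by
              have := abs_le.1 hwb; linarith [this.1]
            have : ((b m : ℤ):ℝ) = ((a m : ℤ):ℝ) + 2 := by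
              have : (b m : ℤ) = a m + 2 := by omega
              exact_mod_cast this
            push_cast
            linarith
        obtain ⟨k, hkodd, hkt⟩ := hmid
        obtain ⟨kk, hkk⟩ := hkodd
        -- tails at m+1 are ±1 with opposite signs
        exfalso
        apply hrel
        have hska : tailSeq a x (m+1) = (((k - a m : ℤ)):ℝ) := by
          show (t - ((a m : ℤ):ℝ))⁻¹ = _
          have hka1 : k - a m = 1 ∨ k - a m = -1 := by
            have h9 := int_window hkt hwa
            rw [abs_le] at h9
            omega
          rcases hka1 with h | h <;> rw [hkt] <;>
            · rw [show ((a m : ℤ):ℝ) = (k:ℝ) - ((k - a m : ℤ):ℝ) by push_cast; ring, h]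
              norm_num
        have hskb : tailSeq b x (m+1) = (((k - b m : ℤ)):ℝ) := by
          show (tailSeq b x m - ((b m : ℤ):ℝ))⁻¹ = _
          rw [← heq]
          have hkb1 : k - b m = 1 ∨ k - b m = -1 := by
            have h9 := int_window hkt hwb
            rw [abs_le] at h9
            omega
          rcases hkb1 with h | h <;> rw [hkt] <;>
            · rw [show ((b m : ℤ):ℝ) = (k:ℝ) - ((k - b m : ℤ):ℝ) by push_cast; ring, h]
              norm_num
        have hka1 : k - a m = 1 ∨ k - a m = -1 := by
          have h9 := int_window hkt hwa; rw [abs_le] at h9; omega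
        have hkb1 : k - b m = 1 ∨ k - b m = -1 := by
          have h9 := int_window hkt hwb; rw [abs_le] at h9; omega
        have hopp : k - b m = -(k - a m) := by omega
        have hla := tail_locked ha htena hg
        have hlb := tail_locked hb htenb hg
        refine ⟨m+1, m+1, -1, Or.inr rfl, fun i => ?_⟩
        have e1 := hla i (m+1) (k - a m) (by omega) hka1 hska
        have e2 := hlb i (m+1) (k - b m) (by omega) hkb1 (by rw [hskb])
        rw [e1, e2, hopp]
        ring
      refine ⟨?_, ?_⟩
      · intro j hj
        rcases Nat.lt_succ_iff_lt_or_eq.1 hj with h | rfl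
        · exact hpre j h
        · exact hab
      · show (t - ((a m : ℤ):ℝ))⁻¹ = (tailSeq b x m - ((b m : ℤ):ℝ))⁻¹
        rw [← heq, hab]
  exact absurd (⟨0, 0, 1, Or.inl rfl, fun i => by
    have := (key (i+1)).1 i (by omega)
    simpa using this⟩ : TailRelE a b) hrel

-- ### section 6a : expansion constructions

def shiftCF (a : ℕ → ℤ) (k : ℤ) : ℕ → ℤ := fun n => if n = 0 then a 0 + 2*k else a n
def negCF (a : ℕ → ℤ) : ℕ → ℤ := fun n => -(a n)
def invCF (a : ℕ → ℤ) : ℕ → ℤ := fun n => if n = 0 then 0 else a (n-1)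

lemma toOP_add (c : ℚ) (v : Option ℚ) :
    toOP (v.map (fun q => c + q)) = addOP ((c:ℝ)) (toOP v) := by
  cases v with
  | none => rfl
  | some q => show toOP (Option.some (c + q)) = _; simp [toOP]

@[simp] lemma addOP_zero (z : OnePoint ℝ) : addOP 0 z = z := by
  cases z with
  | infty => rfl
  | coe r => simp

lemma shiftCF_isEICF {a : ℕ → ℤ} (ha : IsEICF a) (k : ℤ) : IsEICF (shiftCF a k) := by
  constructor
  · intro i
    by_cases h : i = 0
    · subst h
      obtain ⟨t, ht⟩ := ha.1 0
      exact ⟨t + k, by simp [shiftCF]; omega⟩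
    · simpa [shiftCF, h] using ha.1 i
  · intro i hi
    have h : i ≠ 0 := by omega
    simpa [shiftCF, h] using ha.2 i hi

lemma shiftCF_conv (a : ℕ → ℤ) (k : ℤ) (n : ℕ) :
    cfConv (shiftCF a k) n = (cfConv a n).map (fun q => ((2*k : ℤ):ℚ) + q) := by
  cases n with
  | zero =>
    show cfVal [shiftCF a k 0] = (cfVal [a 0]).map _
    show (cfInv (cfVal [])).map _ = ((cfInv (cfVal [])).map _).map _
    simp only [cfVal, cfInv, Option.map_some]
    congr 1
    show ((shiftCF a k 0 : ℤ) : ℚ) + 0 = ((2*k:ℤ):ℚ) + (((a 0 : ℤ):ℚ) + 0)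
    simp only [shiftCF, if_pos rfl]
    push_cast; ring
  | succ n =>
    rw [cfConv_succ, cfConv_succ]
    have htail : (fun i => shiftCF a k (i+1)) = (fun i => a (i+1)) := by
      funext i; simp [shiftCF]
    rw [htail, Option.map_map]
    congr 1
    funext q
    show ((shiftCF a k 0 : ℤ):ℚ) + q = ((2*k:ℤ):ℚ) + (((a 0 : ℤ):ℚ) + q)
    simp only [shiftCF, if_pos rfl]
    push_cast; ring

lemma shiftCF_tendsto {a : ℕ → ℤ} {x : ℝ} (k : ℤ)
    (hten : Tendsto (fun n => toOP (cfConv a n)) atTop (𝓝 ((x : ℝ) : OnePoint ℝ))) :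
    Tendsto (fun n => toOP (cfConv (shiftCF a k) n)) atTop
      (𝓝 ((((2*k : ℤ):ℝ) + x : ℝ) : OnePoint ℝ)) := by
  have h1 : (fun n => toOP (cfConv (shiftCF a k) n)) =
      (fun n => addOP (((2*k:ℤ):ℝ)) (toOP (cfConv a n))) := by
    funext n
    rw [shiftCF_conv, toOP_add]
    norm_num
  rw [h1]
  have h2 := ((continuous_addOP (((2*k:ℤ):ℝ))).tendsto _).comp hten
  simpa [Function.comp_def] using h2

lemma shiftCF_rel (a : ℕ → ℤ) (k : ℤ) : TailRelE a (shiftCF a k) := by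
  refine ⟨1, 1, 1, Or.inl rfl, fun i => ?_⟩
  have h : 1 + i ≠ 0 := by omega
  simp [shiftCF, h]

lemma negCF_isEICF {a : ℕ → ℤ} (ha : IsEICF a) : IsEICF (negCF a) := by
  constructor
  · intro i; exact (ha.1 i).neg
  · intro i hi; simpa [negCF] using ha.2 i hi

lemma negCF_tendsto {a : ℕ → ℤ} {x : ℝ}
    (hten : Tendsto (fun n => toOP (cfConv a n)) atTop (𝓝 ((x : ℝ) : OnePoint ℝ))) :
    Tendsto (fun n => toOP (cfConv (negCF a) n)) atTop (𝓝 (((-x : ℝ)) : OnePoint ℝ)) := by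
  have h1 : (fun n => toOP (cfConv (negCF a) n)) =
      (fun n => negOP (toOP (cfConv a n))) := by
    funext n
    rw [show cfConv (negCF a) n = cfConv (fun i => -(a i)) n from rfl, cfConv_neg, toOP_neg]
  rw [h1]
  have h2 := (continuous_negOP.tendsto _).comp hten
  simpa [Function.comp_def] using h2

lemma negCF_rel (a : ℕ → ℤ) : TailRelE a (negCF a) :=
  ⟨0, 0, -1, Or.inr rfl, fun i => by simp [negCF]⟩

lemma invCF_isEICF {a : ℕ → ℤ} (ha : IsEICF a) (h0 : a 0 ≠ 0) : IsEICF (invCF a) := by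
  constructor
  · intro i
    by_cases h : i = 0
    · simp [invCF, h]
    · simpa [invCF, h] using ha.1 (i-1)
  · intro i hi
    have h : i ≠ 0 := by omega
    simp only [invCF, if_neg h]
    rcases Nat.lt_or_ge i 2 with h2 | h2
    · have : i = 1 := by omega
      subst this
      simpa using h0
    · exact ha.2 (i-1) (by omega)

lemma invCF_tendsto {a : ℕ → ℤ} {x : ℝ} (hx : x ≠ 0)
    (hten : Tendsto (fun n => toOP (cfConv a n)) atTop (𝓝 ((x : ℝ) : OnePoint ℝ))) :
    Tendsto (fun n => toOP (cfConv (invCF a) n)) atTop (𝓝 (((x⁻¹ : ℝ)) : OnePoint ℝ)) := by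
  have hstep : ∀ n, toOP (cfConv (invCF a) (n+1)) = invOP (toOP (cfConv a n)) := by
    intro n
    rw [cfConv_succ]
    have htail : (fun i => invCF a (i+1)) = a := by
      funext i; simp [invCF]
    rw [htail]
    have h := toOP_step (0 : ℤ) (cfConv a n)
    have h2 : (fun q => ((invCF a 0 : ℤ):ℚ) + q) = (fun q => ((0:ℤ):ℚ) + q) := by
      funext q; simp [invCF]
    rw [h2, h]
    show addOP (((0:ℤ)):ℝ) (invOP (toOP (cfConv a n))) = invOP (toOP (cfConv a n))
    rw [Int.cast_zero, addOP_zero]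
  have h1 : Tendsto (fun n => toOP (cfConv (invCF a) (n+1))) atTop
      (𝓝 (((x⁻¹ : ℝ)) : OnePoint ℝ)) := by
    have h2 := (continuous_invOP.tendsto ((x : ℝ) : OnePoint ℝ)).comp hten
    rw [invOP_coe_ne x hx] at h2
    exact Tendsto.congr (fun n => (hstep n).symm) h2
  exact (tendsto_add_atTop_iff_nat 1).1 h1

lemma invCF_rel (a : ℕ → ℤ) : TailRelE a (invCF a) := by
  refine ⟨0, 1, 1, Or.inl rfl, fun i => ?_⟩
  have h : 1 + i ≠ 0 := by omega
  simp only [invCF, if_neg h, one_mul]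
  congr 1
  omega

/-- expansion of the inverse: general case -/
lemma inv_expansion {a : ℕ → ℤ} {x : ℝ} (ha : IsEICF a)
    (hten : Tendsto (fun n => toOP (cfConv a n)) atTop (𝓝 ((x : ℝ) : OnePoint ℝ)))
    (hg : Good x) :
    ∃ a' : ℕ → ℤ, IsEICF a' ∧
      Tendsto (fun n => toOP (cfConv a' n)) atTop (𝓝 (((x⁻¹ : ℝ)) : OnePoint ℝ)) ∧
      TailRelE a a' := by
  have hx0 : x ≠ 0 := hg.ne_zero
  by_cases h0 : a 0 = 0
  · -- x = 0 + 1/t₁, so the tail is an expansion of x⁻¹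
    refine ⟨fun i => a (1+i), ?_, ?_, ?_⟩
    · constructor
      · intro i; exact ha.1 _
      · intro i hi; exact ha.2 (1+i) (by omega)
    · have h := (tail_props ha hten hg 1).2
      have heq : tailSeq a x 1 = x⁻¹ := by
        show (tailSeq a x 0 - ((a 0 : ℤ):ℝ))⁻¹ = x⁻¹
        show (x - ((a 0 : ℤ):ℝ))⁻¹ = x⁻¹
        rw [h0]
        norm_num
      rwa [heq] at h
    · exact ⟨1, 0, 1, Or.inl rfl, fun i => by simp⟩
  · exact ⟨invCF a, invCF_isEICF ha h0, invCF_tendsto hx0 hten, invCF_rel a⟩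

-- ### section 6b : the extended theta relation is an equivalence

lemma ETE_refl (x : ℝ) : ExtendedThetaEquiv x x := by
  refine ⟨1, 0, 0, 1, Or.inl (by norm_num), Or.inl ⟨odd_one, Even.zero, Even.zero, odd_one⟩,
    by norm_num, by norm_num⟩

lemma ETE_symm {x y : ℝ} (h : ExtendedThetaEquiv x y) : ExtendedThetaEquiv y x := by
  obtain ⟨A, B, C, D, hdet, hpar, hden, hval⟩ := h
  have hyy : y * ((C:ℝ) * x + D) = (A:ℝ)*x + B := by
    rw [hval]; exact div_mul_cancel₀ _ hden
  have hid : x * (((-C : ℤ):ℝ) * y + ((A:ℤ):ℝ)) = ((D:ℤ):ℝ)*y - ((B:ℤ):ℝ) := by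
    push_cast
    linear_combination -hyy
  have hden2 : ((-C : ℤ):ℝ) * y + ((A:ℤ):ℝ) ≠ 0 := by
    intro h0
    have hDB : ((D:ℤ):ℝ)*y - ((B:ℤ):ℝ) = 0 := by rw [← hid, h0]; ring
    have hA : ((A:ℤ):ℝ) = (C:ℝ)*y := by push_cast at h0 ⊢; linarith
    have hB : ((B:ℤ):ℝ) = (D:ℝ)*y := by linarith
    have h2 : (A:ℝ)*D - (B:ℝ)*C = 0 := by
      push_cast at hA hB
      rw [hA, hB]; ring
    rcases hdet with h | h
    · have hc : ((A*D - B*C : ℤ):ℝ) = 1 := by rw [h]; norm_num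
      push_cast at hc
      linarith
    · have hc : ((A*D - B*C : ℤ):ℝ) = -1 := by rw [h]; norm_num
      push_cast at hc
      linarith
  refine ⟨D, -B, -C, A, ?_, ?_, hden2, ?_⟩
  · rcases hdet with h | h
    · exact Or.inl (by linear_combination h)
    · exact Or.inr (by linear_combination h)
  · rcases hpar with ⟨hA, hB, hC, hD⟩ | ⟨hA, hB, hC, hD⟩
    · exact Or.inl ⟨hD, hB.neg, hC.neg, hA⟩
    · exact Or.inr ⟨hD, hB.neg, hC.neg, hA⟩
  · rw [eq_div_iff hden2]
    push_cast
    push_cast at hid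
    linear_combination hid

lemma theta_par_mul {A1 B1 C1 D1 A2 B2 C2 D2 : ℤ}
    (h2 : (Odd A2 ∧ Even B2 ∧ Even C2 ∧ Odd D2) ∨ (Even A2 ∧ Odd B2 ∧ Odd C2 ∧ Even D2))
    (h1 : (Odd A1 ∧ Even B1 ∧ Even C1 ∧ Odd D1) ∨ (Even A1 ∧ Odd B1 ∧ Odd C1 ∧ Even D1)) :
    (Odd (A2*A1 + B2*C1) ∧ Even (A2*B1 + B2*D1) ∧ Even (C2*A1 + D2*C1) ∧ Odd (C2*B1 + D2*D1)) ∨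
    (Even (A2*A1 + B2*C1) ∧ Odd (A2*B1 + B2*D1) ∧ Odd (C2*A1 + D2*C1) ∧ Even (C2*B1 + D2*D1)) := by
  rcases h2 with ⟨a2, b2, c2, d2⟩ | ⟨a2, b2, c2, d2⟩ <;>
    rcases h1 with ⟨a1, b1, c1, d1⟩ | ⟨a1, b1, c1, d1⟩
  · exact Or.inl ⟨(a2.mul a1).add_even (b2.mul_right C1),
      (b1.mul_left A2).add (b2.mul_right D1),
      (c2.mul_right A1).add (c1.mul_left D2),
      (c2.mul_right B1).add_odd (d2.mul d1)⟩
  · exact Or.inr ⟨(a1.mul_left A2).add (b2.mul_right C1),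
      (a2.mul b1).add_even (b2.mul_right D1),
      (c2.mul_right A1).add_odd (d2.mul c1),
      (c2.mul_right B1).add (d1.mul_left D2)⟩
  · exact Or.inr ⟨(a2.mul_right A1).add (c1.mul_left B2),
      (a2.mul_right B1).add_odd (b2.mul d1),
      (c2.mul a1).add_even (d2.mul_right C1),
      (b1.mul_left C2).add (d2.mul_right D1)⟩
  · exact Or.inl ⟨(a2.mul_right A1).add_odd (b2.mul c1),
      (a2.mul_right B1).add (d1.mul_left B2),
      (a1.mul_left C2).add (d2.mul_right C1),
      (c2.mul b1).add_even (d2.mul_right D1)⟩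

lemma ETE_trans {x y z : ℝ} (hxy : ExtendedThetaEquiv x y) (hyz : ExtendedThetaEquiv y z) :
    ExtendedThetaEquiv x z := by
  obtain ⟨A1, B1, C1, D1, hdet1, hpar1, hden1, hval1⟩ := hxy
  obtain ⟨A2, B2, C2, D2, hdet2, hpar2, hden2, hval2⟩ := hyz
  have hprod : ((C2*A1 + D2*C1 : ℤ):ℝ) * x + ((C2*B1 + D2*D1 : ℤ):ℝ)
      = ((C1:ℝ)*x + D1) * ((C2:ℝ)*y + D2) := by
    rw [hval1]
    push_cast
    field_simp
    ring
  have hden_new : ((C2*A1 + D2*C1 : ℤ):ℝ) * x + ((C2*B1 + D2*D1 : ℤ):ℝ) ≠ 0 := by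
    rw [hprod]; exact mul_ne_zero hden1 hden2
  have hnum : ((A2*A1 + B2*C1 : ℤ):ℝ) * x + ((A2*B1 + B2*D1 : ℤ):ℝ)
      = ((C1:ℝ)*x + D1) * ((A2:ℝ)*y + B2) := by
    rw [hval1]
    push_cast
    field_simp
    ring
  refine ⟨A2*A1 + B2*C1, A2*B1 + B2*D1, C2*A1 + D2*C1, C2*B1 + D2*D1, ?_, ?_, hden_new, ?_⟩
  · have hdd : (A2*A1 + B2*C1)*(C2*B1 + D2*D1) - (A2*B1 + B2*D1)*(C2*A1 + D2*C1)
        = (A2*D2 - B2*C2) * (A1*D1 - B1*C1) := by ring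
    rcases hdet1 with h1 | h1 <;> rcases hdet2 with h2 | h2
    · exact Or.inl (by rw [hdd, h1, h2]; norm_num)
    · exact Or.inr (by rw [hdd, h1, h2]; norm_num)
    · exact Or.inr (by rw [hdd, h1, h2]; norm_num)
    · exact Or.inl (by rw [hdd, h1, h2]; norm_num)
  · exact theta_par_mul hpar2 hpar1
  · rw [hval2, div_eq_div_iff hden2 hden_new, hprod, hnum]
    ring

/-- `t' = c + 1/t` gives a theta equivalence between `t` and `t'` (`c` even, `t ≠ 0`). -/
lemma ETE_step {t t' : ℝ} {c : ℤ} (hc : Even c) (ht : t ≠ 0) (h : t' = (c:ℝ) + t⁻¹) :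
    ExtendedThetaEquiv t t' := by
  refine ⟨c, 1, 1, 0, Or.inr (by ring), Or.inr ⟨hc, odd_one, odd_one, Even.zero⟩, ?_, ?_⟩
  · simpa using ht
  · rw [h]
    push_cast
    field_simp
    rw [add_zero, mul_div_cancel_left₀ _ ht]

lemma ETE_neg (x : ℝ) : ExtendedThetaEquiv x (-x) := by
  refine ⟨-1, 0, 0, 1, Or.inr (by ring), Or.inl ⟨⟨-1, by ring⟩, Even.zero, Even.zero, odd_one⟩,
    by norm_num, by norm_num⟩

-- ### section 7 : reverse direction

lemma ETE_tailSeq {a : ℕ → ℤ} {x : ℝ} (ha : IsEICF a)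
    (hten : Tendsto (fun n => toOP (cfConv a n)) atTop (𝓝 ((x : ℝ) : OnePoint ℝ)))
    (hg : Good x) (m : ℕ) : ExtendedThetaEquiv x (tailSeq a x m) := by
  induction m with
  | zero => exact ETE_refl x
  | succ m IH =>
    refine ETE_trans IH (ETE_symm ?_)
    exact ETE_step (ha.1 m) (tail_ne_zero ha hten hg (m+1)) (tail_step_eq ha hten hg m)

lemma reverse_direction {x y : ℝ} {a b : ℕ → ℤ}
    (hgx : Good x) (hgy : Good y)
    (ha : IsEICFExpansion a ((x : ℝ) : OnePoint ℝ))
    (hb : IsEICFExpansion b ((y : ℝ) : OnePoint ℝ))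
    (h : ∃ m n : ℕ, (∀ i : ℕ, a (m + i) = b (n + i)) ∨ (∀ i : ℕ, a (m + i) = -b (n + i))) :
    ExtendedThetaEquiv x y := by
  obtain ⟨m, n, hcase⟩ := h
  have h1 := (tail_props ha.1 ha.2 hgx m).2
  have h2 := (tail_props hb.1 hb.2 hgy n).2
  rcases hcase with hpos | hneg
  · have hseq : (fun i => a (m+i)) = (fun i => b (n+i)) := funext hpos
    rw [hseq] at h1
    have heq : ((tailSeq a x m : ℝ) : OnePoint ℝ) = ((tailSeq b y n : ℝ) : OnePoint ℝ) :=
      tendsto_nhds_unique h1 h2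
    rw [OnePoint.coe_eq_coe] at heq
    refine ETE_trans (ETE_tailSeq ha.1 ha.2 hgx m) ?_
    rw [heq]
    exact ETE_symm (ETE_tailSeq hb.1 hb.2 hgy n)
  · have hseq : (fun i => a (m+i)) = negCF (fun i => b (n+i)) := by
      funext i
      show a (m+i) = -(b (n+i))
      exact hneg i
    rw [hseq] at h1
    have h2' := negCF_tendsto h2
    have heq : ((tailSeq a x m : ℝ) : OnePoint ℝ) = ((- tailSeq b y n : ℝ) : OnePoint ℝ) :=
      tendsto_nhds_unique h1 h2'
    rw [OnePoint.coe_eq_coe] at heq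
    refine ETE_trans (ETE_tailSeq ha.1 ha.2 hgx m) ?_
    rw [heq]
    refine ETE_trans (ETE_symm (ETE_neg (tailSeq b y n))) ?_
    exact ETE_symm (ETE_tailSeq hb.1 hb.2 hgy n)

-- ### section 8 : forward direction

lemma euclid_core (C D : ℤ) (hC : 0 < C) (hpar : (Even C ∧ Odd D) ∨ (Odd C ∧ Even D)) :
    ∃ k : ℤ, (2*k*C + D).natAbs < C.natAbs := by
  have hdm := Int.mul_ediv_add_emod (D + C) (2*C)
  set q := (D + C) / (2*C) with hq
  set r := (D + C) % (2*C) with hr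
  have hr0 : 0 ≤ r := Int.emod_nonneg _ (by omega)
  have hrb : r < 2*C := Int.emod_lt_of_pos _ (by omega)
  refine ⟨-q, ?_⟩
  have hv : 2*(-q)*C + D = r - C := by linear_combination -hdm
  have hrne : r ≠ 0 := by
    intro h0
    obtain ⟨w, hw⟩ : ∃ w, D + C = 2*w := ⟨C*q, by rw [h0] at hdm; linear_combination -hdm⟩
    rcases hpar with ⟨⟨c2,hc2⟩, ⟨d2,hd2⟩⟩ | ⟨⟨c2,hc2⟩, ⟨d2,hd2⟩⟩ <;> omega
  rw [hv]
  omega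

lemma euclid_step (C D : ℤ) (hC : C ≠ 0) (hpar : (Even C ∧ Odd D) ∨ (Odd C ∧ Even D)) :
    ∃ k : ℤ, (2*k*C + D).natAbs < C.natAbs := by
  rcases lt_or_gt_of_ne hC with hneg | hpos
  · have hpar' : (Even (-C) ∧ Odd D) ∨ (Odd (-C) ∧ Even D) := by
      rcases hpar with ⟨h1, h2⟩ | ⟨h1, h2⟩
      · exact Or.inl ⟨h1.neg, h2⟩
      · exact Or.inr ⟨h1.neg, h2⟩
    obtain ⟨k, hk⟩ := euclid_core (-C) D (by omega) hpar'
    refine ⟨-k, ?_⟩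
    have he : 2*(-k)*C + D = 2*k*(-C) + D := by ring
    rw [he]
    exact lt_of_lt_of_eq hk (Int.natAbs_neg C)
  · exact euclid_core C D hpos hpar

lemma forward_core : ∀ N : ℕ, ∀ A B C D : ℤ, C.natAbs = N →
    (A*D - B*C = 1 ∨ A*D - B*C = -1) →
    ((Odd A ∧ Even B ∧ Even C ∧ Odd D) ∨ (Even A ∧ Odd B ∧ Odd C ∧ Even D)) →
    ∀ x y : ℝ, Good x →
    ((C:ℝ)*x + (D:ℝ) ≠ 0) → y = ((A:ℝ)*x + (B:ℝ))/((C:ℝ)*x + (D:ℝ)) →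
    ∀ a b : ℕ → ℤ, IsEICF a →
    Tendsto (fun n => toOP (cfConv a n)) atTop (𝓝 ((x:ℝ) : OnePoint ℝ)) →
    IsEICF b →
    Tendsto (fun n => toOP (cfConv b n)) atTop (𝓝 ((y:ℝ) : OnePoint ℝ)) →
    TailRelE a b := by
  intro N
  induction N using Nat.strong_induction_on with
  | _ N IH =>
  intro A B C D hN hdet hpar x y hgx hden hval a b ha htena hb htenb
  by_cases hC : C = 0
  · -- base case : y = (A*D) x + (B*D)
    subst hC
    have hparI : Odd A ∧ Even B ∧ Odd D := by
      rcases hpar with ⟨h1,h2,h3,h4⟩ | ⟨h1,h2,h3,h4⟩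
      · exact ⟨h1,h2,h4⟩
      · exfalso; rcases h3 with ⟨kk,hkk⟩; omega
    obtain ⟨hA, hB, hD⟩ := hparI
    have hAD : A*D = 1 ∨ A*D = -1 := by
      rcases hdet with h | h
      · exact Or.inl (by linear_combination h)
      · exact Or.inr (by linear_combination h)
    have hDu : D = 1 ∨ D = -1 := by
      rcases hAD with h | h
      · exact Int.isUnit_iff.1 (IsUnit.of_mul_eq_one (a := D) A (by linear_combination h))
      · exact Int.isUnit_iff.1 (IsUnit.of_mul_eq_one (a := D) (-A) (by linear_combination -h))
    have hval2 : y = ((A*D : ℤ):ℝ)*x + ((B*D : ℤ):ℝ) := by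
      rcases hDu with rfl | rfl
      · rw [hval]; push_cast; field_simp; ring
      · rw [hval]; push_cast; field_simp; ring
    have hgy : Good y := by
      rcases hAD with h | h
      · have : y = x - ((-(B*D) : ℤ):ℝ) := by rw [hval2, h]; push_cast; ring
        rw [this]
        exact hgx.sub_int ((hB.mul_right D).neg)
      · have : y = -x - ((-(B*D) : ℤ):ℝ) := by rw [hval2, h]; push_cast; ring
        rw [this]
        exact (hgx.neg).sub_int ((hB.mul_right D).neg)
    obtain ⟨e2, he2⟩ := hB.mul_right D
    rcases hAD with h | h
    · -- y = x + B*D = 2*e2 + x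
      have he2' : ((B*D : ℤ):ℝ) = 2*((e2:ℤ):ℝ) := by rw [he2]; push_cast; ring
      have hy' : (((2*e2 : ℤ):ℝ) + x : ℝ) = y := by
        rw [hval2, h, he2']
        push_cast
        ring
      have htsh := shiftCF_tendsto e2 htena
      rw [hy'] at htsh
      have hu := tails_unique (shiftCF_isEICF ha e2) hb htsh htenb hgy
      exact (shiftCF_rel a e2).trans hu
    · -- y = -x + B*D
      have htn := negCF_tendsto htena
      have he2' : ((B*D : ℤ):ℝ) = 2*((e2:ℤ):ℝ) := by rw [he2]; push_cast; ring
      have hy' : (((2*e2 : ℤ):ℝ) + (-x) : ℝ) = y := by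
        rw [hval2, h, he2']
        push_cast
        ring
      have htsh := shiftCF_tendsto e2 htn
      rw [hy'] at htsh
      have hu := tails_unique (shiftCF_isEICF (negCF_isEICF ha) e2) hb htsh htenb hgy
      exact ((negCF_rel a).trans (shiftCF_rel (negCF a) e2)).trans hu
  · -- inductive step
    have hparCD : (Even C ∧ Odd D) ∨ (Odd C ∧ Even D) := by
      rcases hpar with ⟨h1,h2,h3,h4⟩ | ⟨h1,h2,h3,h4⟩
      · exact Or.inl ⟨h3, h4⟩
      · exact Or.inr ⟨h3, h4⟩
    obtain ⟨k, hk⟩ := euclid_step C D hC hparCD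
    -- x₁ = x - 2k, x₂ = x₁⁻¹
    have hgx₁ : Good (x - ((2*k : ℤ):ℝ)) := hgx.sub_int ⟨k, by ring⟩
    have hx₁0 : x - ((2*k : ℤ):ℝ) ≠ 0 := hgx₁.ne_zero
    have hgx₂ : Good (x - ((2*k : ℤ):ℝ))⁻¹ := hgx₁.inv
    -- expansion of x₁
    have htena₁ : Tendsto (fun n => toOP (cfConv (shiftCF a (-k)) n)) atTop
        (𝓝 (((x - ((2*k : ℤ):ℝ) : ℝ)) : OnePoint ℝ)) := by
      have h1 := shiftCF_tendsto (-k) htena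
      have h2 : (((2*(-k) : ℤ):ℝ) + x : ℝ) = x - ((2*k : ℤ):ℝ) := by push_cast; ring
      rwa [h2] at h1
    have ha₁ : IsEICF (shiftCF a (-k)) := shiftCF_isEICF ha (-k)
    obtain ⟨a₂, ha₂, htena₂, hrel₂⟩ := inv_expansion ha₁ htena₁ hgx₁
    -- new matrix
    have hdet' : (2*k*A + B)*C - A*(2*k*C + D) = 1 ∨ (2*k*A + B)*C - A*(2*k*C + D) = -1 := by
      rcases hdet with h | h
      · exact Or.inr (by linear_combination -h)
      · exact Or.inl (by linear_combination -h)
    have hpar' : (Odd (2*k*A + B) ∧ Even A ∧ Even (2*k*C + D) ∧ Odd C) ∨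
        (Even (2*k*A + B) ∧ Odd A ∧ Odd (2*k*C + D) ∧ Even C) := by
      rcases hpar with ⟨h1,h2,h3,h4⟩ | ⟨h1,h2,h3,h4⟩
      · right
        obtain ⟨b2, hb2⟩ := h2
        obtain ⟨d2, hd2⟩ := h4
        exact ⟨⟨k*A + b2, by rw [hb2]; ring⟩, h1, ⟨k*C + d2, by rw [hd2]; ring⟩, h3⟩
      · left
        obtain ⟨b2, hb2⟩ := h2
        obtain ⟨d2, hd2⟩ := h4
        exact ⟨⟨k*A + b2, by rw [hb2]; ring⟩, h1, ⟨k*C + d2, by rw [hd2]; ring⟩, h3⟩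
    have hxeq : x = (x - ((2*k : ℤ):ℝ)) + ((2*k : ℤ):ℝ) := by ring
    have hu : (x - ((2*k : ℤ):ℝ)) * (x - ((2*k : ℤ):ℝ))⁻¹ = 1 := mul_inv_cancel₀ hx₁0
    have hdenrw : ((2*k*C + D : ℤ):ℝ) * (x - ((2*k : ℤ):ℝ))⁻¹ + ((C:ℤ):ℝ)
        = (((C:ℤ):ℝ)*x + ((D:ℤ):ℝ)) / (x - ((2*k : ℤ):ℝ)) := by
      rw [eq_div_iff hx₁0]
      push_cast at hu ⊢
      linear_combination (2*(k:ℝ)*(C:ℝ) + (D:ℝ)) * hu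
    have hden' : ((2*k*C + D : ℤ):ℝ) * (x - ((2*k : ℤ):ℝ))⁻¹ + ((C:ℤ):ℝ) ≠ 0 := by
      rw [hdenrw]
      exact div_ne_zero hden hx₁0
    have hval' : y = (((2*k*A + B : ℤ):ℝ) * (x - ((2*k : ℤ):ℝ))⁻¹ + ((A:ℤ):ℝ)) /
        (((2*k*C + D : ℤ):ℝ) * (x - ((2*k : ℤ):ℝ))⁻¹ + ((C:ℤ):ℝ)) := by
      rw [hval, div_eq_div_iff hden hden']
      push_cast at hu ⊢
      linear_combination ((A:ℝ)*(D:ℝ) - (B:ℝ)*(C:ℝ)) * hu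
    have hmeas : (2*k*C + D).natAbs < N := by rw [← hN]; exact hk
    have hres := IH (2*k*C + D).natAbs hmeas (2*k*A + B) A (2*k*C + D) C rfl hdet' hpar'
      ((x - ((2*k : ℤ):ℝ))⁻¹) y hgx₂ hden' hval' a₂ b ha₂ htena₂ hb htenb
    exact ((shiftCF_rel a (-k)).trans hrel₂).trans hres

end

/-- Serret's theorem for even-integer continued fractions: two reals that are not
∞-rationals are equivalent under the extended theta group iff their EICF expansions
have tails which agree, or agree up to sign. -/
theorem eicf_serret (x y : ℝ)
    (hx : ¬∃ q : ℚ, x = (q : ℝ) ∧ Odd (q.num + (q.den : ℤ)))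
    (hy : ¬∃ q : ℚ, y = (q : ℝ) ∧ Odd (q.num + (q.den : ℤ)))
    (a b : ℕ → ℤ)
    (ha : IsEICFExpansion a ((x : ℝ) : OnePoint ℝ))
    (hb : IsEICFExpansion b ((y : ℝ) : OnePoint ℝ)) :
    ExtendedThetaEquiv x y ↔
      ∃ m n : ℕ, (∀ i : ℕ, a (m + i) = b (n + i)) ∨ (∀ i : ℕ, a (m + i) = -b (n + i)) := by
  have hgx := good_of_not_inftyRat hx
  have hgy := good_of_not_inftyRat hy
  constructor
  · intro h
    obtain ⟨A, B, C, D, hdet, hpar, hden, hval⟩ := h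
    have hrel := forward_core C.natAbs A B C D rfl hdet hpar x y hgx hden hval a b
      ha.1 ha.2 hb.1 hb.2
    obtain ⟨m, n, ε, hε, hrel⟩ := hrel
    refine ⟨m, n, ?_⟩
    rcases hε with rfl | rfl
    · left; intro i; simpa using hrel i
    · right; intro i; have := hrel i; omega
  · intro h
    exact reverse_direction hgx hgy ha hb h
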